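/- arXiv:1410.4348 — 10 statements merged into one kernel-verified Lean document; each statement's English description precedes it below -/
import Mathlib

section
/- Let k be a field, v : Valuation k ℝ≥0 a (rank-one) valuation with values in the nonnegative reals, and A a commutative k-algebra that is an integral domain. Let q : A → ℝ≥0 satisfy q 0 = 0, q 1 = 1, and q (a*b) = q a * q b for all a, b ∈ A. Then the following are equivalent: (i) q (a + b) ≤ max (q a) (q b) for all a, b ∈ A and q (algebraMap k A λ) = v λ for all λ ∈ k (i.e. q is a valuation on A compatible with v); (ii) for every n ∈ ℕ and all families λ : Fin n → k and a : Fin n → A with ∑ i, (λ i) • (a i) = 0, either v (λ i) * q (a i) = 0 for all i, or there exist indices i ≠ j with v (λ i) * q (a i) = v (λ j) * q (a j) and v (λ l) * q (a l) ≤ v (λ i) * q (a i) for all l (the maximum of the valuated terms is attained at least twice). -/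
/-!
If `q` is a valuation compatible with `v`, the terms `v (λᵢ) * q (aᵢ)` are the values `q (λᵢ • aᵢ)`
of the summands of a vanishing sum; a unique strictly largest term would have to equal the value
of minus the sum of the others, which is strictly smaller by the ultrametric inequality.
Conversely, the relations `λ • 1 + (-1) • λ = 0` and `a + b - (a + b) = 0` already force
`q (λ) = v λ` and `q (a + b) ≤ max (q a) (q b)`.
-/

open scoped NNReal

open Finset

def MaxAttainedTwice {ι Γ : Type*} [LE Γ] [Zero Γ] (t : ι → Γ) : Prop :=
  (∀ i, t i = 0) ∨ ∃ i j, i ≠ j ∧ t i = t j ∧ ∀ l, t l ≤ t i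

namespace MaxAttainedTwice

variable {Γ : Type*} [Zero Γ]

theorem eq_of_fin_two [LE Γ] {t : Fin 2 → Γ} (h : MaxAttainedTwice t) : t 0 = t 1 := by
  rcases h with hzero | ⟨i, j, hij, heq, -⟩
  · rw [hzero 0, hzero 1]
  · fin_cases i <;> fin_cases j
    all_goals first | exact absurd rfl hij | exact heq | exact heq.symm

theorem le_max_of_fin_three [LinearOrder Γ] {t : Fin 3 → Γ} (h : MaxAttainedTwice t) :
    t 2 ≤ max (t 0) (t 1) := by
  rcases h with hzero | ⟨i, j, hij, heq, hmax⟩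
  · rw [hzero 2, hzero 0]
    exact le_max_left _ _
  · obtain ⟨m, hm, htm⟩ : ∃ m, m ≠ 2 ∧ t m = t i := by
      by_cases hi : i = 2
      · exact ⟨j, hi ▸ hij.symm, heq.symm⟩
      · exact ⟨i, hi, rfl⟩
    have h2 : t 2 ≤ t m := htm ▸ hmax 2
    fin_cases m
    · exact le_max_of_le_left h2
    · exact le_max_of_le_right h2
    · exact absurd rfl hm

end MaxAttainedTwice

theorem Valuation.maxAttainedTwice_of_sum_eq_zero {R Γ₀ ι : Type*} [Ring R]
    [LinearOrderedCommMonoidWithZero Γ₀] [Fintype ι] (w : Valuation R Γ₀) {x : ι → R}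
    (hx : ∑ i, x i = 0) : MaxAttainedTwice fun i ↦ w (x i) := by
  classical
  rcases isEmpty_or_nonempty ι with _ | _
  · exact Or.inl fun i ↦ isEmptyElim i
  obtain ⟨i, -, hmax⟩ := exists_max_image univ (fun i ↦ w (x i)) univ_nonempty
  by_cases hzero : w (x i) = 0
  · exact Or.inl fun l ↦ le_antisymm (hzero ▸ hmax l (mem_univ l)) zero_le
  obtain ⟨j, hji, hj⟩ : ∃ j ≠ i, w (x j) = w (x i) := by
    by_contra! hne
    have hrest : w (∑ j ∈ univ.erase i, x j) < w (x i) :=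
      w.map_sum_lt hzero fun j hj ↦
        (hmax j (mem_univ j)).lt_of_ne (hne j (ne_of_mem_erase hj))
    have hsum : ∑ j ∈ univ.erase i, x j = -x i := by
      rw [eq_neg_iff_add_eq_zero, sum_erase_add _ _ (mem_univ i), hx]
    rw [hsum, w.map_neg] at hrest
    exact hrest.false
  exact Or.inr ⟨i, j, hji.symm, hj.symm, fun l ↦ hmax l (mem_univ l)⟩

theorem universal_tropicalization_is_analytification_general
    {k : Type*} [Field k] (v : Valuation k ℝ≥0)
    {A : Type*} [CommRing A] [Algebra k A]
    (q : A → ℝ≥0) (hq0 : q 0 = 0) (hq1 : q 1 = 1)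
    (hqmul : ∀ a b : A, q (a * b) = q a * q b) :
    ((∀ a b : A, q (a + b) ≤ max (q a) (q b)) ∧
        ∀ lam : k, q (algebraMap k A lam) = v lam) ↔
      (∀ (n : ℕ) (lam : Fin n → k) (a : Fin n → A), (∑ i, lam i • a i) = 0 →
        (∀ i, v (lam i) * q (a i) = 0) ∨
          ∃ i j, i ≠ j ∧ v (lam i) * q (a i) = v (lam j) * q (a j) ∧
            ∀ l, v (lam l) * q (a l) ≤ v (lam i) * q (a i)) := by
  constructor
  · rintro ⟨hadd, hv⟩ n lam a hsum
    let w : Valuation A ℝ≥0 :=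
      { toFun := q, map_zero' := hq0, map_one' := hq1, map_mul' := hqmul
        map_add_le_max' := hadd }
    have hterm : ∀ i, w (lam i • a i) = v (lam i) * q (a i) := fun i ↦ by
      change q _ = _
      rw [Algebra.smul_def, hqmul, hv]
    have h := w.maxAttainedTwice_of_sum_eq_zero hsum
    simp only [hterm] at h
    exact h
  · intro H
    have hv : ∀ lam : k, q (algebraMap k A lam) = v lam := fun lam ↦ by
      have h := MaxAttainedTwice.eq_of_fin_two
        (H 2 ![lam, -1] ![1, algebraMap k A lam] (by simp [Algebra.algebraMap_eq_smul_one]))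
      simpa [hq1] using h.symm
    refine ⟨fun a b ↦ ?_, hv⟩
    have h := MaxAttainedTwice.le_max_of_fin_three
      (H 3 ![1, 1, -1] ![a, b, a + b] (by
        simp only [Fin.sum_univ_three, Fin.isValue, Matrix.cons_val_zero, one_smul,
          Matrix.cons_val_one, Matrix.cons_val, smul_add, neg_smul]
        abel))
    simpa using h

/-- **Theorem A (affine, set-theoretic form).**
A multiplicative map `q : A → ℝ≥0` with `q 0 = 0`, `q 1 = 1` on an integral domain `A` over a
valued field `(k, v)` is a valuation compatible with `v` (i.e. a point of the Berkovich
analytification of `Spec A`) if and only if for every `k`-linear relation `∑ λᵢ • aᵢ = 0` in `A`,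
the maximum of the tropicalized terms `v (λᵢ) * q (aᵢ)` is zero or attained at least twice
(i.e. `q` is a point of the set-theoretic tropicalization of `Spec A` with respect to the
universal embedding). -/
theorem universal_tropicalization_is_analytification
    {k : Type*} [Field k] (v : Valuation k ℝ≥0)
    {A : Type*} [CommRing A] [IsDomain A] [Algebra k A]
    (q : A → ℝ≥0) (hq0 : q 0 = 0) (hq1 : q 1 = 1)
    (hqmul : ∀ a b : A, q (a * b) = q a * q b) :
    ((∀ a b : A, q (a + b) ≤ max (q a) (q b)) ∧
        ∀ lam : k, q (algebraMap k A lam) = v lam) ↔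
      (∀ (n : ℕ) (lam : Fin n → k) (a : Fin n → A), (∑ i, lam i • a i) = 0 →
        (∀ i, v (lam i) * q (a i) = 0) ∨
          ∃ i j, i ≠ j ∧ v (lam i) * q (a i) = v (lam j) * q (a j) ∧
            ∀ l, v (lam l) * q (a l) ≤ v (lam i) * q (a i)) :=
  universal_tropicalization_is_analytification_general v q hq0 hq1 hqmul
end

section
/- Let R be a commutative ring, S an idempotent semiring, ν : R → S a generalized valuation, and A a commutative R-algebra that is an integral domain. Let T be a commutative semiring together with a semiring homomorphism ι : S → T. Let α : A → T satisfy α 0 = 0, α 1 = 1, and α (a*b) = α a * α b for all a, b ∈ A. Then the following are equivalent: (a) for every f ∈ ker ev (f a finitely supported function A → R with ∑_{a ∈ supp f} (f a) • a = 0) and every a₀ ∈ supp f, one has ∑_{a ∈ supp f} ι (ν (f a)) * α a = ∑_{a ∈ supp f, a ≠ a₀} ι (ν (f a)) * α a (all bend relations of the coefficientwise valuation of f hold under α); (b) α (r • a) = ι (ν r) * α a for all r ∈ R, a ∈ A, and α a + α b + α (a+b) = α a + α b for all a, b ∈ A (i.e. α is a valuation on A compatible with ν). -/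
/-!
If `α` is a valuation compatible with `ν`, then for `f ∈ ker ev` the term `f a₀ • a₀` equals
`-∑_{a ≠ a₀} f a • a`, and the ultrametric inequality, iterated over a finite sum, absorbs its
value `ι (ν (f a₀)) * α a₀` into `∑_{a ≠ a₀} ι (ν (f a)) * α a`.

Conversely, compatibility with `ν` and the ultrametric inequality are the bend relations of the
kernel elements `x_{r • a} - r x_a` and `x_a + x_b - x_{a + b}`, up to degenerate cases: when
`r • a = a` one uses `(r - 1) x_a` instead, and when `a = b` one uses `2 • a = a + a` and
`ν 2 + 1 = 1`.
-/

open Finset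

theorem add_self_of_ringHom {S T : Type*} [NonAssocSemiring S] [NonAssocSemiring T]
    (ι : S →+* T) (hS : ∀ s : S, s + s = s) (t : T) : t + t = t := by
  rw [← mul_one t, ← mul_add, ← map_one ι, ← map_add, hS]

section Ultrametric

variable {A T : Type*} [AddCommMonoid T] (α : A → T)

theorem apply_sum_add_sum_apply [AddCommMonoid A] {ι : Type*} (hα0 : α 0 = 0)
    (hadd : ∀ a b, α a + α b + α (a + b) = α a + α b) (s : Finset ι) (g : ι → A) :
    α (∑ i ∈ s, g i) + ∑ i ∈ s, α (g i) = ∑ i ∈ s, α (g i) := by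
  classical
  induction s using Finset.induction_on with
  | empty => simp [hα0]
  | insert i s hi ih =>
    rw [sum_insert hi, sum_insert hi]
    calc α (g i + ∑ j ∈ s, g j) + (α (g i) + ∑ j ∈ s, α (g j))
        = α (g i + ∑ j ∈ s, g j) + (α (g i) + (α (∑ j ∈ s, g j) + ∑ j ∈ s, α (g j))) := by
          rw [ih]
      _ = (α (g i) + α (∑ j ∈ s, g j) + α (g i + ∑ j ∈ s, g j)) + ∑ j ∈ s, α (g j) := by
          abel
      _ = α (g i) + ∑ j ∈ s, α (g j) := by rw [hadd, add_assoc, ih]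

theorem sum_apply_eq_sum_erase_of_sum_eq_zero [AddCommGroup A] {ι : Type*} [DecidableEq ι]
    (hα0 : α 0 = 0) (hαneg : ∀ a, α (-a) = α a)
    (hadd : ∀ a b, α a + α b + α (a + b) = α a + α b) {s : Finset ι} {g : ι → A}
    (hg : ∑ i ∈ s, g i = 0) {i₀ : ι} (hi₀ : i₀ ∈ s) :
    ∑ i ∈ s, α (g i) = ∑ i ∈ s.erase i₀, α (g i) := by
  have hgi₀ : g i₀ = -∑ i ∈ s.erase i₀, g i :=
    eq_neg_of_add_eq_zero_left ((add_sum_erase s g hi₀).trans hg)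
  rw [← add_sum_erase s _ hi₀, hgi₀, hαneg]
  exact apply_sum_add_sum_apply α hα0 hadd _ _

end Ultrametric

section Bend

variable {R A T : Type*} [CommRing R] [CommRing A] [Algebra R A] [DecidableEq A] [CommSemiring T]

def BendRelations (v : R → T) (α : A → T) : Prop :=
  ∀ f : MonoidAlgebra R A, MonoidAlgebra.lift R A A (MonoidHom.id A) f = 0 →
    ∀ a₀ ∈ f.coeff.support,
      ∑ a ∈ f.coeff.support, v (f.coeff a) * α a = ∑ a ∈ f.coeff.support.erase a₀, v (f.coeff a) * α a

variable {v : R → T} {α : A → T}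

theorem mul_eq_mul_of_mul_sub_eq_zero (hvneg : ∀ r, v (-r) = v r)
    (hvadd : ∀ r s, v (r + s) + v r + v s = v r + v s) {r s : R} {t : T}
    (h : v (r - s) * t = 0) : v r * t = v s * t := by
  have hrs := congrArg (· * t) (hvadd s (r - s))
  have hsr := congrArg (· * t) (hvadd r (-(r - s)))
  rw [hvneg, neg_sub, add_sub_cancel] at hsr
  simp only [add_mul, h, add_zero, add_sub_cancel] at hrs hsr
  rw [← hrs, add_comm, hsr]

namespace BendRelations

theorem add_sum_erase_of_support_subset (h : BendRelations v α) (hv0 : v 0 = 0)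
    {f : MonoidAlgebra R A} (hf : MonoidAlgebra.lift R A A (MonoidHom.id A) f = 0)
    {s : Finset A} (hs : f.coeff.support ⊆ s) {a₀ : A} (ha₀ : f.coeff a₀ ≠ 0) :
    v (f.coeff a₀) * α a₀ + ∑ a ∈ s.erase a₀, v (f.coeff a) * α a =
      ∑ a ∈ s.erase a₀, v (f.coeff a) * α a := by
  have ha₀s : a₀ ∈ f.coeff.support := Finsupp.mem_support_iff.mpr ha₀
  have hsum : ∑ a ∈ s.erase a₀, v (f.coeff a) * α a =
      ∑ a ∈ f.coeff.support.erase a₀, v (f.coeff a) * α a := by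
    refine (sum_subset (erase_subset_erase a₀ hs) fun a has ha => ?_).symm
    rw [Finsupp.notMem_support_iff.mp fun h' => ha (mem_erase.mpr ⟨ne_of_mem_erase has, h'⟩),
      hv0, zero_mul]
  rw [hsum, add_sum_erase _ (fun a => v (f.coeff a) * α a) ha₀s]
  exact h f hf a₀ ha₀s

theorem mul_eq_zero_of_smul_eq_zero (h : BendRelations v α) (hv0 : v 0 = 0) {c : R} {x : A}
    (hcx : c • x = 0) : v c * α x = 0 := by
  by_cases hc : c = 0
  · rw [hc, hv0, zero_mul]
  have key := h.add_sum_erase_of_support_subset hv0 (f := MonoidAlgebra.single x c)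
    (a₀ := x) (by simpa using hcx) Finsupp.support_single_subset (by simpa using hc)
  simpa using key

theorem mul_eq_mul_of_smul_add_smul_eq_zero (h : BendRelations v α) (hv0 : v 0 = 0)
    {c d : R} {x y : A} (hc : c ≠ 0) (hd : d ≠ 0) (hxy : x ≠ y) (hcd : c • x + d • y = 0) :
    v c * α x = v d * α y := by
  set f := MonoidAlgebra.single x c + MonoidAlgebra.single y d
  have hf : MonoidAlgebra.lift R A A (MonoidHom.id A) f = 0 := by simpa [f] using hcd
  have hs : f.coeff.support ⊆ {x, y} := by
    refine Finsupp.support_add.trans (union_subset ?_ ?_) <;>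
    exact Finsupp.support_single_subset.trans (by simp)
  have hfx : f.coeff x = c := by simp [f, MonoidAlgebra.coeff_single, hxy.symm]
  have hfy : f.coeff y = d := by simp [f, MonoidAlgebra.coeff_single, hxy]
  have hx := h.add_sum_erase_of_support_subset hv0 hf hs (hfx ▸ hc)
  have hy := h.add_sum_erase_of_support_subset hv0 hf (pair_comm x y ▸ hs) (hfy ▸ hd)
  simp only [hfx, hfy, erase_insert_eq_erase, mem_singleton, hxy, hxy.symm, not_false_eq_true,
    erase_eq_of_notMem, sum_singleton] at hx hy
  rw [← hy, add_comm, hx]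

theorem add_add_eq_of_add_eq [Nontrivial R] (h : BendRelations v α) (hv0 : v 0 = 0)
    (hv1 : v 1 = 1) (hvneg : ∀ r, v (-r) = v r) {x y z : A} (hxy : x ≠ y) (hxz : x ≠ z)
    (hyz : y ≠ z) (hz : x + y = z) : α x + α y + α z = α x + α y := by
  set f := MonoidAlgebra.single x (1 : R) + MonoidAlgebra.single y 1 + MonoidAlgebra.single z (-1)
  have hf : MonoidAlgebra.lift R A A (MonoidHom.id A) f = 0 := by
    simp [f, ← hz]
  have hs : f.coeff.support ⊆ {z, x, y} := by
    refine Finsupp.support_add.trans (union_subset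
      (Finsupp.support_add.trans (union_subset ?_ ?_)) ?_) <;>
    exact Finsupp.support_single_subset.trans (by simp)
  have hfx : f.coeff x = 1 := by simp [f, MonoidAlgebra.coeff_single, hxy, hxz]
  have hfy : f.coeff y = 1 := by simp [f, MonoidAlgebra.coeff_single, hxy.symm, hyz]
  have hfz : f.coeff z = -1 := by simp [f, MonoidAlgebra.coeff_single, hxz, hyz]
  have key := h.add_sum_erase_of_support_subset hv0 hf hs (hfz ▸ neg_ne_zero.mpr one_ne_zero)
  simp only [hfx, hfy, hfz, hvneg, hv1, one_mul, erase_insert_eq_erase, mem_insert, mem_singleton,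
    hxy, hxz.symm, hyz.symm, or_self, not_false_eq_true, erase_eq_of_notMem, sum_insert,
    sum_singleton] at key
  rwa [add_comm]

variable [Nontrivial R]

theorem apply_smul (h : BendRelations v α) (hv0 : v 0 = 0) (hv1 : v 1 = 1)
    (hvneg : ∀ r, v (-r) = v r) (hvadd : ∀ r s, v (r + s) + v r + v s = v r + v s)
    (hα0 : α 0 = 0) (r : R) (a : A) : α (r • a) = v r * α a := by
  by_cases hr : r = 0
  · rw [hr, zero_smul, hα0, hv0, zero_mul]
  by_cases hra : r • a = a
  · have hsub : v (r - 1) * α a = 0 :=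
      h.mul_eq_zero_of_smul_eq_zero hv0 (by rw [sub_smul, one_smul, hra, sub_self])
    rw [mul_eq_mul_of_mul_sub_eq_zero hvneg hvadd hsub, hv1, one_mul, hra]
  · have key := h.mul_eq_mul_of_smul_add_smul_eq_zero hv0 one_ne_zero (neg_ne_zero.mpr hr) hra
      (by rw [one_smul, neg_smul, add_neg_cancel])
    rwa [hv1, one_mul, hvneg] at key

theorem add_add_apply_add_eq (h : BendRelations v α) (hT : ∀ t : T, t + t = t) (hv0 : v 0 = 0)
    (hv1 : v 1 = 1) (hvneg : ∀ r, v (-r) = v r) (hvadd : ∀ r s, v (r + s) + v r + v s = v r + v s)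
    (hα0 : α 0 = 0) (a b : A) : α a + α b + α (a + b) = α a + α b := by
  by_cases ha : a = 0
  · rw [ha, zero_add, hα0, zero_add, hT]
  by_cases hb : b = 0
  · rw [hb, add_zero, hα0, add_zero, hT]
  by_cases hab : a + b = 0
  · rw [hab, hα0, add_zero]
  by_cases hab' : a = b
  · subst hab'
    have hv2 : v 2 + 1 = 1 := by
      have := hvadd 1 1
      rwa [hv1, add_assoc, hT, one_add_one_eq_two] at this
    calc α a + α a + α (a + a) = (1 + v 2) * α a := by
          rw [hT, ← two_smul R a, h.apply_smul hv0 hv1 hvneg hvadd hα0, add_mul, one_mul]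
      _ = α a + α a := by rw [add_comm, hv2, one_mul, hT]
  · exact h.add_add_eq_of_add_eq hv0 hv1 hvneg hab' (fun h' => hb (left_eq_add.mp h'))
      (fun h' => ha (right_eq_add.mp h')) rfl

end BendRelations

theorem bendRelations_of_smul_of_add (hv1 : v 1 = 1) (hvneg : ∀ r, v (-r) = v r)
    (hα0 : α 0 = 0) (hsmul : ∀ (r : R) (a : A), α (r • a) = v r * α a)
    (hadd : ∀ a b, α a + α b + α (a + b) = α a + α b) : BendRelations v α := by
  intro f hf a₀ ha₀
  have hαneg (a : A) : α (-a) = α a := by rw [← neg_one_smul R a, hsmul, hvneg, hv1, one_mul]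
  have hev : ∑ a ∈ f.coeff.support, f.coeff a • a = 0 := by
    simpa only [MonoidAlgebra.lift_apply, Finsupp.sum, MonoidHom.id_apply] using hf
  simp only [← hsmul]
  exact sum_apply_eq_sum_erase_of_sum_eq_zero α hα0 hαneg hadd hev ha₀

end Bend

theorem bend_relations_iff_valuation_general
    {R S A T : Type*} [CommRing R] [CommSemiring S] [CommRing A] [Algebra R A] [DecidableEq A]
    [CommSemiring T]
    (hS : ∀ s : S, s + s = s)
    (ν : R → S) (hν0 : ν 0 = 0) (hν1 : ν 1 = 1)
    (hνneg : ∀ a : R, ν (-a) = ν a)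
    (hνadd : ∀ a b : R, ν (a + b) + ν a + ν b = ν a + ν b)
    (ι : S →+* T)
    (α : A → T) (hα0 : α 0 = 0) :
    (∀ f : MonoidAlgebra R A,
        MonoidAlgebra.lift R A A (MonoidHom.id A) f = 0 →
        ∀ a₀ ∈ f.coeff.support,
          (∑ a ∈ f.coeff.support, ι (ν (f.coeff a)) * α a) =
            ∑ a ∈ f.coeff.support.erase a₀, ι (ν (f.coeff a)) * α a) ↔
      ((∀ (r : R) (a : A), α (r • a) = ι (ν r) * α a) ∧
        ∀ a b : A, α a + α b + α (a + b) = α a + α b) := by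
  rcases subsingleton_or_nontrivial R with hR | hR
  · have : Subsingleton T := subsingleton_of_zero_eq_one <| by
      rw [← map_zero ι, ← hν0, Subsingleton.elim (0 : R) 1, hν1, map_one]
    exact ⟨fun _ => ⟨fun _ _ => Subsingleton.elim _ _, fun _ _ => Subsingleton.elim _ _⟩,
      fun _ _ _ _ _ => Subsingleton.elim _ _⟩
  set v : R → T := fun r => ι (ν r)
  have hv0 : v 0 = 0 := by simp only [v, hν0, map_zero]
  have hv1 : v 1 = 1 := by simp only [v, hν1, map_one]
  have hvneg (r : R) : v (-r) = v r := congrArg ι (hνneg r)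
  have hvadd (r s : R) : v (r + s) + v r + v s = v r + v s := by simp only [v, ← map_add, hνadd]
  show BendRelations v α ↔ _
  exact ⟨fun h => ⟨h.apply_smul hv0 hv1 hvneg hvadd hα0,
      h.add_add_apply_add_eq (add_self_of_ringHom ι hS) hv0 hv1 hvneg hvadd hα0⟩,
    fun ⟨hsmul, hadd⟩ => bendRelations_of_smul_of_add hv1 hvneg hα0 hsmul hadd⟩

/-- **Moduli of valuations (affine computational content).**
Let `ν : R → S` be a generalized valuation into an idempotent semiring, `A` an integral
`R`-algebra, and `ι : S → T` a homomorphism of semirings.  A multiplicative map `α : A → T`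
satisfies all the bend relations of the coefficientwise valuations of elements of the kernel of
the evaluation map `ev : MonoidAlgebra R A → A` if and only if `α` is a valuation on `A`
compatible with `ν`. -/
theorem bend_relations_iff_valuation
    {R S A T : Type*} [CommRing R] [CommSemiring S] [CommRing A] [IsDomain A] [Algebra R A] [DecidableEq A]
    [CommSemiring T]
    (hS : ∀ s : S, s + s = s)
    (ν : R → S) (hν0 : ν 0 = 0) (hν1 : ν 1 = 1)
    (hνmul : ∀ a b : R, ν (a * b) = ν a * ν b)
    (hνneg : ∀ a : R, ν (-a) = ν a)
    (hνadd : ∀ a b : R, ν (a + b) + ν a + ν b = ν a + ν b)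
    (ι : S →+* T)
    (α : A → T) (hα0 : α 0 = 0) (hα1 : α 1 = 1)
    (hαmul : ∀ a b : A, α (a * b) = α a * α b) :
    (∀ f : MonoidAlgebra R A,
        MonoidAlgebra.lift R A A (MonoidHom.id A) f = 0 →
        ∀ a₀ ∈ f.coeff.support,
          (∑ a ∈ f.coeff.support, ι (ν (f.coeff a)) * α a) =
            ∑ a ∈ f.coeff.support.erase a₀, ι (ν (f.coeff a)) * α a) ↔
      ((∀ (r : R) (a : A), α (r • a) = ι (ν r) * α a) ∧
        ∀ a b : A, α a + α b + α (a + b) = α a + α b) :=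
  bend_relations_iff_valuation_general hS ν hν0 hν1 hνneg hνadd ι α hα0
end

section
/- Let R be a commutative ring, S an idempotent semiring, ν : R → S a generalized valuation, and A a commutative R-algebra that is an integral domain. Let G ⊆ MonoidAlgebra R A be the set consisting of the elements single a r − single (r • a) 1 for all r ∈ R and a ∈ A, together with the elements single a 1 + single b 1 + single c 1 for all a, b, c ∈ A with a + b + c = 0. Then the congruence (RingCon) on MonoidAlgebra S A generated by the pairs (ν_* f, (ν_* f).erase m) for f ∈ ker ev and m ∈ A equals the congruence generated by the pairs (ν_* g, (ν_* g).erase m) for g ∈ G and m ∈ A. In other words, G is a strong tropical basis of ker ev for every valuation ν. -/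
/-!
Write `φ a` for the class of the monomial `x_a` modulo the congruence generated by `G`. The bend
relations of `r x_a - x_{r a}` give `ν r · x_a ≡ x_{r a}`, and those of `x_a + x_b + x_c` give
`φ a + φ b = φ a + φ c` whenever `a + b + c = 0`. Hence `ν_* f ≡ ∑ φ (f_a a)`, and for
`f ∈ ker ev` the points `w_a = f_a a` sum to zero, so the three-term relation absorbs
`φ w_m = φ (-∑_{a ≠ m} w_a)` into the remaining sum: this is the bend relation of `ν_* f` at `m`.
-/

open Finsupp

theorem valuation_add_add_right {R S : Type*} [Ring R] [AddCommSemigroup S] {ν : R → S}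
    (hνneg : ∀ a : R, ν (-a) = ν a) (hνadd : ∀ a b : R, ν (a + b) + ν a + ν b = ν a + ν b)
    (a b : R) : ν (a + b) + ν b = ν a + ν b := by
  have h := hνadd (a + b) (-b)
  rw [add_neg_cancel_right, hνneg] at h
  calc ν (a + b) + ν b = ν a + ν (a + b) + ν b := h.symm
    _ = ν (a + b) + ν a + ν b := by rw [add_comm (ν a)]
    _ = ν a + ν b := hνadd a b

section ThreeTermRelation

variable {A Q : Type*} [AddCommGroup A] [AddCommMonoid Q] {φ : A → Q}

theorem apply_neg_eq_of_three_term (h0 : φ 0 = 0)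
    (h3 : ∀ a b c, a + b + c = 0 → φ a + φ b = φ a + φ c) (a : A) : φ (-a) = φ a := by
  have h₁ := h3 a (-a) 0 (by abel)
  have h₂ := h3 (-a) a 0 (by abel)
  rw [h0, add_zero] at h₁ h₂
  rw [← h₂, add_comm, h₁]

theorem apply_neg_sum_add_sum_of_three_term (h0 : φ 0 = 0)
    (h3 : ∀ a b c, a + b + c = 0 → φ a + φ b = φ a + φ c) {ι : Type*} (T : Finset ι)
    (w : ι → A) : φ (-∑ i ∈ T, w i) + ∑ i ∈ T, φ (w i) = ∑ i ∈ T, φ (w i) := by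
  classical
  induction T using Finset.induction_on with
  | empty => simp [h0]
  | @insert i T hi ih =>
    set s := ∑ j ∈ T, w j
    have hswap : φ (w i) + φ (-(w i + s)) = φ (w i) + φ (-s) := by
      rw [h3 (w i) (-(w i + s)) s (by abel), apply_neg_eq_of_three_term h0 h3]
    calc φ (-∑ j ∈ insert i T, w j) + ∑ j ∈ insert i T, φ (w j)
        = (φ (w i) + φ (-(w i + s))) + ∑ j ∈ T, φ (w j) := by
          rw [Finset.sum_insert hi, Finset.sum_insert hi]; abel
      _ = φ (w i) + (φ (-s) + ∑ j ∈ T, φ (w j)) := by rw [hswap, add_assoc]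
      _ = ∑ j ∈ insert i T, φ (w j) := by rw [ih, Finset.sum_insert hi]

end ThreeTermRelation

theorem Finsupp.erase_mapRange {α M N : Type*} [Zero M] [Zero N] {f : M → N} {hf : f 0 = 0}
    (g : α →₀ M) (m : α) : (mapRange f hf g).erase m = mapRange f hf (g.erase m) := by
  ext x
  by_cases hx : x = m <;> simp [hx, hf]

theorem Finsupp.mapRange_single_add_single {α M N : Type*} [AddZeroClass M] [AddZeroClass N]
    {f : M → N} {hf : f 0 = 0} {a b : α} (hab : a ≠ b) (r s : M) :
    mapRange f hf (single a r + single b s) = single a (f r) + single b (f s) := by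
  ext x
  by_cases ha : x = a <;> by_cases hb : x = b <;> simp_all

theorem Finsupp.mapRange_single_add_single_add_single {α M N : Type*} [AddZeroClass M]
    [AddZeroClass N] {f : M → N} {hf : f 0 = 0} {a b c : α} (hab : a ≠ b) (hac : a ≠ c)
    (hbc : b ≠ c) (r s t : M) :
    mapRange f hf (single a r + single b s + single c t) =
      single a (f r) + single b (f s) + single c (f t) := by
  ext x
  by_cases ha : x = a <;> by_cases hb : x = b <;> by_cases hc : x = c <;> simp_all

/-- `ψ` plays the role of the quotient map by a congruence, so that bend relations become
equations. -/
def RespectsBends {α S Q : Type*} [AddCommMonoid S] [AddCommMonoid Q] (ψ : (α →₀ S) →+ Q)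
    (p : α →₀ S) : Prop :=
  ∀ m, ψ (p.erase m) = ψ p

namespace RespectsBends

variable {α S Q : Type*} [AddCommMonoid S] [AddCommMonoid Q] {ψ : (α →₀ S) →+ Q}

theorem map_single_eq_zero {a : α} {s : S} (h : RespectsBends ψ (single a s)) :
    ψ (single a s) = 0 := by
  rw [← h a, erase_single, map_zero]

theorem map_single_eq_map_single {a b : α} (hab : a ≠ b) {s t : S}
    (h : RespectsBends ψ (single a s + single b t)) : ψ (single a s) = ψ (single b t) := by
  have erase_a : (single a s + single b t).erase a = single b t := by
    rw [erase_add, erase_single, erase_single_ne hab, zero_add]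
  have erase_b : (single a s + single b t).erase b = single a s := by
    rw [erase_add, erase_single, erase_single_ne hab.symm, add_zero]
  simpa only [erase_a, erase_b] using (h b).trans (h a).symm

end RespectsBends

section Generators

variable {R S A Q : Type*} [Ring R] [AddCommMonoidWithOne S] [AddCommGroup A] [AddCommMonoid Q]
  {ψ : (A →₀ S) →+ Q} {ν : R → S}

theorem map_single_valuation_eq [Module R A] (hν0 : ν 0 = 0) (hν1 : ν 1 = 1)
    (hνneg : ∀ a : R, ν (-a) = ν a) (hνadd : ∀ a b : R, ν (a + b) + ν a + ν b = ν a + ν b)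
    (hbend : ∀ (r : R) (a : A),
      RespectsBends ψ (mapRange ν hν0 (single a r - single (r • a) 1)))
    (r : R) (a : A) : ψ (single a (ν r)) = ψ (single (r • a) 1) := by
  rcases eq_or_ne a (r • a) with hfix | hne
  · have hzero : ψ (single a (ν (r - 1))) = 0 := by
      have h := hbend r a
      rw [← hfix, ← single_sub, mapRange_single] at h
      exact h.map_single_eq_zero
    have hν : ν r + ν (r - 1) = ν 1 + ν (r - 1) := by
      simpa using valuation_add_add_right hνneg hνadd 1 (r - 1)
    calc ψ (single a (ν r)) = ψ (single a (ν r)) + ψ (single a (ν (r - 1))) := by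
          rw [hzero, add_zero]
      _ = ψ (single a (ν 1)) + ψ (single a (ν (r - 1))) := by
          rw [← map_add, ← map_add, ← single_add, ← single_add, hν]
      _ = ψ (single (r • a) 1) := by rw [hzero, add_zero, hν1, ← hfix]
  · have h := hbend r a
    rw [sub_eq_add_neg, ← single_neg, mapRange_single_add_single hne, hνneg, hν1] at h
    exact h.map_single_eq_map_single hne

theorem map_single_one_add_self (hS : ∀ s : S, s + s = s) (hν0 : ν 0 = 0) (hν1 : ν 1 = 1)
    (hνneg : ∀ a : R, ν (-a) = ν a) (hνadd : ∀ a b : R, ν (a + b) + ν a + ν b = ν a + ν b)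
    (hbend : ∀ a b c : A, a + b + c = 0 →
      RespectsBends ψ (mapRange ν hν0 (single a (1 : R) + single b 1 + single c 1)))
    {a c : A} (hac : a + a + c = 0) :
    ψ (single a 1) + ψ (single a 1) = ψ (single a 1) + ψ (single c 1) := by
  rcases eq_or_ne a c with rfl | hne
  · rfl
  have h := hbend a a c hac
  rw [← single_add, one_add_one_eq_two, mapRange_single_add_single hne, hν1] at h
  have hν2 : 1 + ν 2 = 1 := by
    have h11 := valuation_add_add_right hνneg hνadd (1 : R) 1
    rwa [one_add_one_eq_two, hν1, hS, add_comm] at h11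
  rw [← h.map_single_eq_map_single hne, ← map_add, ← map_add, ← single_add, ← single_add, hS,
    hν2]

theorem map_single_one_add_eq (hS : ∀ s : S, s + s = s) (hν0 : ν 0 = 0) (hν1 : ν 1 = 1)
    (hνneg : ∀ a : R, ν (-a) = ν a) (hνadd : ∀ a b : R, ν (a + b) + ν a + ν b = ν a + ν b)
    (hbend : ∀ a b c : A, a + b + c = 0 →
      RespectsBends ψ (mapRange ν hν0 (single a (1 : R) + single b 1 + single c 1)))
    {a b c : A} (habc : a + b + c = 0) :
    ψ (single a 1) + ψ (single b 1) = ψ (single a 1) + ψ (single c 1) := by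
  rcases eq_or_ne b c with rfl | hbc
  · rfl
  rcases eq_or_ne a b with rfl | hab
  · exact map_single_one_add_self hS hν0 hν1 hνneg hνadd hbend habc
  rcases eq_or_ne a c with rfl | hac
  · exact (map_single_one_add_self hS hν0 hν1 hνneg hνadd hbend
      (by rwa [add_right_comm])).symm
  have h := hbend a b c habc
  rw [mapRange_single_add_single_add_single hab hac hbc, hν1] at h
  simpa only [map_add, erase_add, erase_single, erase_single_ne hab.symm, erase_single_ne hbc,
    erase_single_ne hac.symm, erase_single_ne hbc.symm, add_zero] using (h c).trans (h b).symm

end Generators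

theorem respectsBends_mapRange_of_sum_smul_eq_zero {R S A Q : Type*} [Ring R]
    [AddCommMonoidWithOne S] [AddCommGroup A] [Module R A] [AddCommMonoid Q]
    {ψ : (A →₀ S) →+ Q} {ν : R → S}
    (hν0 : ν 0 = 0) (hsingle : ∀ (r : R) (a : A), ψ (single a (ν r)) = ψ (single (r • a) 1))
    (h3 : ∀ a b c : A, a + b + c = 0 →
      ψ (single a 1) + ψ (single b 1) = ψ (single a 1) + ψ (single c 1))
    {f : A →₀ R} (hf : f.sum (fun a r => r • a) = 0) : RespectsBends ψ (mapRange ν hν0 f) := by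
  have h0 : ψ (single 0 1) = 0 := by simpa [hν0] using (hsingle 0 0).symm
  have hψ : ∀ g : A →₀ R, ψ (mapRange ν hν0 g) = g.sum fun a r => ψ (single (r • a) 1) := by
    intro g
    rw [← sum_single (mapRange ν hν0 g), sum_mapRange_index (fun _ => single_zero _),
      map_finsuppSum]
    simp only [hsingle]
  intro m
  have hm : f m • m = -(f.erase m).sum fun a r => r • a := eq_neg_of_add_eq_zero_left <|
    (add_sum_erase' f m (fun a r => r • a) fun _ => zero_smul R _).trans hf
  rw [erase_mapRange, hψ, hψ, ← add_sum_erase' f m _ fun _ => by rw [zero_smul, h0], hm]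
  exact (apply_neg_sum_add_sum_of_three_term h0 h3 _ _).symm

theorem RingCon.respectsBends_iff {S M : Type*} [Semiring S] [Mul M]
    (c : RingCon (MonoidAlgebra S M)) (p : M →₀ S) :
    RespectsBends (c.toAddCon.mk'.comp MonoidAlgebra.coeffAddEquiv.symm.toAddMonoidHom) p ↔
      ∀ m, c (MonoidAlgebra.ofCoeff p) (MonoidAlgebra.ofCoeff (p.erase m)) :=
  forall_congr' fun _ => c.toAddCon.eq.trans ⟨c.symm, c.symm⟩

theorem strong_tropical_basis_of_ker_ev_general
    {R S A : Type*} [CommRing R] [CommSemiring S] [CommRing A] [Algebra R A]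
    (hS : ∀ s : S, s + s = s)
    (ν : R → S) (hν0 : ν 0 = 0) (hν1 : ν 1 = 1)
    (hνneg : ∀ a : R, ν (-a) = ν a)
    (hνadd : ∀ a b : R, ν (a + b) + ν a + ν b = ν a + ν b)
    (G : Set (MonoidAlgebra R A))
    (hG : G = {g | (∃ (r : R) (a : A),
          g = MonoidAlgebra.single a r - MonoidAlgebra.single (r • a) 1) ∨
        ∃ a b c : A, a + b + c = 0 ∧
          g = MonoidAlgebra.single a 1 + MonoidAlgebra.single b 1 + MonoidAlgebra.single c 1}) :
    ringConGen (fun (p q : MonoidAlgebra S A) =>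
        ∃ f : MonoidAlgebra R A, MonoidAlgebra.lift R A A (MonoidHom.id A) f = 0 ∧
          ∃ m : A, p = MonoidAlgebra.ofCoeff (Finsupp.mapRange ν hν0 f.coeff) ∧
            q = MonoidAlgebra.ofCoeff ((Finsupp.mapRange ν hν0 f.coeff).erase m)) =
      ringConGen (fun (p q : MonoidAlgebra S A) =>
        ∃ g ∈ G, ∃ m : A,
          p = MonoidAlgebra.ofCoeff (Finsupp.mapRange ν hν0 g.coeff) ∧
            q = MonoidAlgebra.ofCoeff ((Finsupp.mapRange ν hν0 g.coeff).erase m)) := by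
  subst hG
  apply le_antisymm
  · refine RingCon.ringConGen_le.mpr ?_
    rintro p q ⟨f, hf, m, rfl, rfl⟩
    have hker : f.coeff.sum (fun a r => r • a) = 0 := by
      simpa [MonoidAlgebra.lift_apply] using hf
    refine (RingCon.respectsBends_iff _ _).1 ?_ m
    refine respectsBends_mapRange_of_sum_smul_eq_zero hν0
      (map_single_valuation_eq hν0 hν1 hνneg hνadd fun r a => ?_)
      (fun a b c habc => map_single_one_add_eq hS hν0 hν1 hνneg hνadd
        (fun a b c habc => ?_) habc) hker
    · exact (RingCon.respectsBends_iff _ _).2 fun m =>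
        RingConGen.Rel.of _ _ ⟨_, Or.inl ⟨r, a, rfl⟩, m, rfl, rfl⟩
    · exact (RingCon.respectsBends_iff _ _).2 fun m =>
        RingConGen.Rel.of _ _ ⟨_, Or.inr ⟨a, b, c, habc, rfl⟩, m, rfl, rfl⟩
  · refine RingCon.ringConGen_mono ?_
    rintro p q ⟨g, hg, m, rfl, rfl⟩
    refine ⟨g, ?_, m, rfl, rfl⟩
    rcases hg with ⟨r, a, rfl⟩ | ⟨a, b, c, habc, rfl⟩
    · simp
    · simpa using habc

/-- **Strong tropical basis for the kernel of the evaluation map.**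
Let `ν : R → S` be a generalized valuation into an idempotent semiring and `A` an integral
`R`-algebra.  The congruence on `MonoidAlgebra S A` generated by the bend relations of the
coefficientwise valuations of all elements of the kernel of `ev : MonoidAlgebra R A → A` equals
the congruence generated by the bend relations of the coefficientwise valuations of the elements
`r·xₐ − x_{r•a}` (for `r ∈ R`, `a ∈ A`) and `xₐ + x_b + x_c` (for `a + b + c = 0`); i.e. these
elements form a strong tropical basis of `ker ev` for every valuation `ν`. -/
theorem strong_tropical_basis_of_ker_ev
    {R S A : Type*} [CommRing R] [CommSemiring S] [CommRing A] [IsDomain A] [Algebra R A]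
    (hS : ∀ s : S, s + s = s)
    (ν : R → S) (hν0 : ν 0 = 0) (hν1 : ν 1 = 1)
    (hνmul : ∀ a b : R, ν (a * b) = ν a * ν b)
    (hνneg : ∀ a : R, ν (-a) = ν a)
    (hνadd : ∀ a b : R, ν (a + b) + ν a + ν b = ν a + ν b)
    (G : Set (MonoidAlgebra R A))
    (hG : G = {g | (∃ (r : R) (a : A),
          g = MonoidAlgebra.single a r - MonoidAlgebra.single (r • a) 1) ∨
        ∃ a b c : A, a + b + c = 0 ∧
          g = MonoidAlgebra.single a 1 + MonoidAlgebra.single b 1 + MonoidAlgebra.single c 1}) :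
    ringConGen (fun (p q : MonoidAlgebra S A) =>
        ∃ f : MonoidAlgebra R A, MonoidAlgebra.lift R A A (MonoidHom.id A) f = 0 ∧
          ∃ m : A, p = MonoidAlgebra.ofCoeff (Finsupp.mapRange ν hν0 f.coeff) ∧
            q = MonoidAlgebra.ofCoeff ((Finsupp.mapRange ν hν0 f.coeff).erase m)) =
      ringConGen (fun (p q : MonoidAlgebra S A) =>
        ∃ g ∈ G, ∃ m : A,
          p = MonoidAlgebra.ofCoeff (Finsupp.mapRange ν hν0 g.coeff) ∧
            q = MonoidAlgebra.ofCoeff ((Finsupp.mapRange ν hν0 g.coeff).erase m)) :=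
  strong_tropical_basis_of_ker_ev_general hS ν hν0 hν1 hνneg hνadd G hG
end

section
/- Let R be a commutative ring and A a commutative R-algebra. The kernel of the evaluation homomorphism ev : MonoidAlgebra R A →ₐ[R] A, regarded as an additive subgroup of MonoidAlgebra R A, equals the additive subgroup generated by the set of elements single a r − single (r • a) 1 for r ∈ R and a ∈ A, together with the elements single a 1 + single b 1 + single c 1 for a, b, c ∈ A with a + b + c = 0. -/
/-!
Modulo the relations `r·xₐ ≡ x_{r•a}` and `xₐ + x_b + x_c ≡ 0` (for `a + b + c = 0`), the element
`x₀` vanishes and `xₐ + x_b ≡ x_{a+b}`, so every `f` is congruent to the single monomial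
`x_{ev f}`. If `ev f = 0` this monomial is `x₀ ≡ 0`; conversely `ev` kills all the relations.
-/

open MonoidAlgebra

section EvalKernel

variable (R A : Type*) [CommRing R] [Ring A] [Algebra R A]

noncomputable abbrev evalHom : MonoidAlgebra R A →ₐ[R] A := lift R A A (MonoidHom.id A)

def evalKernelGenerators : Set (MonoidAlgebra R A) :=
  {g | (∃ (r : R) (a : A), g = single a r - single (r • a) 1) ∨
    ∃ a b c : A, a + b + c = 0 ∧ g = single a 1 + single b 1 + single c 1}

variable {R A}

theorem evalHom_single (a : A) (r : R) : evalHom R A (single a r) = r • a := by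
  simp [evalHom, lift_single]

theorem evalHom_eq_zero_of_mem_closure {f : MonoidAlgebra R A}
    (hf : f ∈ AddSubgroup.closure (evalKernelGenerators R A)) : evalHom R A f = 0 := by
  induction hf using AddSubgroup.closure_induction with
  | mem g hg =>
    rcases hg with ⟨r, a, rfl⟩ | ⟨a, b, c, habc, rfl⟩
    · rw [map_sub, evalHom_single, evalHom_single, one_smul, sub_self]
    · rw [map_add, map_add, evalHom_single, evalHom_single, evalHom_single, one_smul, one_smul,
        one_smul, habc]
  | zero => exact map_zero _
  | add f g _ _ hf hg => rw [map_add, hf, hg, add_zero]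
  | neg f _ hf => rw [map_neg, hf, neg_zero]

local notation "S" => AddSubgroup.closure (evalKernelGenerators R A)

theorem single_sub_single_smul_mem_closure (r : R) (a : A) : single a r - single (r • a) 1 ∈ S :=
  AddSubgroup.subset_closure (Or.inl ⟨r, a, rfl⟩)

theorem single_add_single_add_single_mem_closure {a b c : A} (habc : a + b + c = 0) :
    single a (1 : R) + single b 1 + single c 1 ∈ S :=
  AddSubgroup.subset_closure (Or.inr ⟨a, b, c, habc, rfl⟩)

theorem single_zero_one_mem_closure : single (0 : A) (1 : R) ∈ S := by
  simpa using neg_mem (single_sub_single_smul_mem_closure (0 : R) (0 : A))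

theorem single_add_single_sub_single_add_mem_closure (a b : A) :
    single a (1 : R) + single b 1 - single (a + b) 1 ∈ S := by
  have habc := single_add_single_add_single_mem_closure (R := R) (add_neg_cancel (a + b))
  have hab0 := single_add_single_add_single_mem_closure (R := R)
    (by rw [add_neg_cancel, add_zero] : a + b + -(a + b) + 0 = 0)
  convert add_mem (sub_mem habc hab0) single_zero_one_mem_closure using 1
  abel

theorem sub_single_evalHom_mem_closure (f : MonoidAlgebra R A) :
    f - single (evalHom R A f) 1 ∈ S := by
  induction f using MonoidAlgebra.induction with
  | zero => simpa using neg_mem (single_zero_one_mem_closure (R := R) (A := A))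
  | single_add a r g _ _ ih =>
    have hsplit : single a r + g - single (evalHom R A (single a r + g)) 1 =
        (single a r - single (r • a) 1) + (g - single (evalHom R A g) 1) +
          (single (r • a) 1 + single (evalHom R A g) 1 - single (r • a + evalHom R A g) 1) := by
      rw [map_add, evalHom_single]
      abel
    rw [hsplit]
    exact add_mem (add_mem (single_sub_single_smul_mem_closure r a) ih)
      (single_add_single_sub_single_add_mem_closure _ _)

end EvalKernel

/-- **Description of the kernel of the evaluation map.**
For a commutative ring `R` and a commutative `R`-algebra `A`, the kernel of the evaluation
homomorphism `ev : MonoidAlgebra R A → A` (determined by `ev xₐ = a`), regarded as an additive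
subgroup, is generated by the elements `r·xₐ − x_{r•a}` (for `r ∈ R`, `a ∈ A`) and
`xₐ + x_b + x_c` (for `a, b, c ∈ A` with `a + b + c = 0`). -/
theorem ker_ev_eq_closure
    {R A : Type*} [CommRing R] [CommRing A] [Algebra R A] :
    (RingHom.ker (MonoidAlgebra.lift R A A (MonoidHom.id A) :
        MonoidAlgebra R A →ₐ[R] A).toRingHom).toAddSubgroup =
      AddSubgroup.closure
        {g | (∃ (r : R) (a : A),
              g = MonoidAlgebra.single a r - MonoidAlgebra.single (r • a) 1) ∨
          ∃ a b c : A, a + b + c = 0 ∧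
            g = MonoidAlgebra.single a 1 + MonoidAlgebra.single b 1 +
              MonoidAlgebra.single c 1} := by
  change _ = AddSubgroup.closure (evalKernelGenerators R A)
  ext f
  rw [Submodule.mem_toAddSubgroup, RingHom.mem_ker]
  refine ⟨fun hf => ?_, evalHom_eq_zero_of_mem_closure⟩
  have hf : evalHom R A f = 0 := hf
  simpa [hf] using add_mem (sub_single_evalHom_mem_closure f) single_zero_one_mem_closure
end

section
/- Let Λ be a type and let 𝕋 := Tropical (WithTop ℝ) be the tropical semiring, equipped with the topology induced by Tropical.untrop from the order topology on WithTop ℝ. Then the topology on Λ → 𝕋 generated (TopologicalSpace.generateFrom) by the collection of sets {x : Λ → 𝕋 | MvPolynomial.eval x f = MvPolynomial.eval x g}ᶜ, for f, g ranging over MvPolynomial Λ 𝕋, equals the product topology. That is, the strong Zariski topology on tropical affine space 𝕋^Λ, whose closed sets are cut out by systems of equalities of tropical polynomials, coincides with the Euclidean (product) topology. -/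
/-- The Euclidean topology on `WithTop ℝ`: the order topology. -/
noncomputable instance : TopologicalSpace (WithTop ℝ) := Preorder.topology (WithTop ℝ)

instance : OrderTopology (WithTop ℝ) := ⟨rfl⟩

/-- The Euclidean topology on the tropical semiring `𝕋 = Tropical (WithTop ℝ)`, induced by
`untrop` from the order topology on `WithTop ℝ`. -/
noncomputable instance : TopologicalSpace (Tropical (WithTop ℝ)) :=
  TopologicalSpace.induced Tropical.untrop inferInstance

/-!
Tropical polynomials are continuous in the Euclidean topology, so the equalizer of two of them is
closed. Conversely, `min (xᵢ, a) ≠ xᵢ` and `min (xᵢ, a) ≠ a` are equations of the strong Zariski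
topology cutting out the subbasic half-lines `a < xᵢ` and `xᵢ < a` of the product topology.
-/

open Set Topology TopologicalSpace MvPolynomial Tropical

theorem WithTop.isEmbedding_coe_ereal : IsEmbedding (WithBot.some : WithTop ℝ → EReal) :=
  WithBot.coe_strictMono.isEmbedding_of_ordConnected <| by
    rw [WithBot.range_coe]; exact ordConnected_Ioi

/- Addition on `WithTop ℝ` is the restriction of addition on `EReal`, which is continuous away
from `⊥ + ⊤`. -/
instance : ContinuousAdd (WithTop ℝ) where
  continuous_add := by
    refine WithTop.isEmbedding_coe_ereal.continuous_iff.2 <|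
      continuous_iff_continuousAt.2 fun p => ?_
    exact (EReal.continuousAt_add (Or.inr WithBot.coe_ne_bot) (Or.inl WithBot.coe_ne_bot)).comp
      (WithTop.isEmbedding_coe_ereal.continuous.prodMap
        WithTop.isEmbedding_coe_ereal.continuous).continuousAt

theorem Tropical.continuous_untrop : Continuous (untrop : Tropical (WithTop ℝ) → WithTop ℝ) :=
  continuous_induced_dom

instance : ContinuousAdd (Tropical (WithTop ℝ)) where
  continuous_add := continuous_induced_rng.2 <| by
    simp only [Function.comp_def, untrop_add]
    exact (continuous_untrop.comp continuous_fst).min (continuous_untrop.comp continuous_snd)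

instance : ContinuousMul (Tropical (WithTop ℝ)) where
  continuous_mul := continuous_induced_rng.2 <| by
    simp only [Function.comp_def, untrop_mul]
    exact (continuous_untrop.comp continuous_fst).add (continuous_untrop.comp continuous_snd)

instance : IsTopologicalSemiring (Tropical (WithTop ℝ)) where

instance : T2Space (Tropical (WithTop ℝ)) :=
  IsEmbedding.t2Space ⟨⟨rfl⟩, untrop_injective⟩

namespace MvPolynomial

/- Closed sets are cut out by equations `f = g` rather than `f = 0`: a semiring such as the
tropical one has no subtraction. -/
abbrev strongZariskiTopology (Λ R : Type*) [CommSemiring R] : TopologicalSpace (Λ → R) :=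
  generateFrom {s | ∃ f g : MvPolynomial Λ R, s = {x | eval x f = eval x g}ᶜ}

theorem pi_le_strongZariskiTopology {Λ R : Type*} [CommSemiring R] [TopologicalSpace R]
    [IsTopologicalSemiring R] [T2Space R] : Pi.topologicalSpace ≤ strongZariskiTopology Λ R :=
  le_generateFrom <| by
    rintro s ⟨f, g, rfl⟩
    exact (isClosed_eq f.continuous_eval g.continuous_eval).isOpen_compl

end MvPolynomial

namespace Tropical

variable {Λ R : Type*} [LinearOrderedAddCommMonoidWithTop R]

theorem isOpen_strongZariski_setOf_lt_untrop_apply (i : Λ) (a : R) :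
    IsOpen[strongZariskiTopology Λ (Tropical R)] {x | a < untrop (x i)} :=
  isOpen_generateFrom_of_mem ⟨X i + C (trop a), X i, by ext; simp [← untrop_inj_iff]⟩

theorem isOpen_strongZariski_setOf_untrop_apply_lt (i : Λ) (a : R) :
    IsOpen[strongZariskiTopology Λ (Tropical R)] {x | untrop (x i) < a} :=
  isOpen_generateFrom_of_mem ⟨X i + C (trop a), C (trop a), by ext; simp [← untrop_inj_iff]⟩

theorem continuous_strongZariski_untrop_apply [TopologicalSpace R] [OrderTopology R] (i : Λ) :
    Continuous[strongZariskiTopology Λ (Tropical R), _] fun x => untrop (x i) :=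
  letI := strongZariskiTopology Λ (Tropical R)
  OrderTopology.continuous_iff.2 fun a =>
    ⟨isOpen_strongZariski_setOf_lt_untrop_apply i a,
      isOpen_strongZariski_setOf_untrop_apply_lt i a⟩

theorem strongZariskiTopology_le_pi :
    strongZariskiTopology Λ (Tropical (WithTop ℝ)) ≤ Pi.topologicalSpace :=
  le_iInf fun i => continuous_iff_le_induced.1 <|
    continuous_induced_rng.2 <| continuous_strongZariski_untrop_apply i

end Tropical

/-- **The strong Zariski topology on tropical affine space is the Euclidean topology.**
The topology on `𝕋^Λ` generated by the complements of the equalizer sets of pairs of tropical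
polynomials (the strong Zariski topology) coincides with the product (Euclidean) topology. -/
theorem strongZariskiTopology_eq_euclidean (Λ : Type*) :
    TopologicalSpace.generateFrom
        {s : Set (Λ → Tropical (WithTop ℝ)) |
          ∃ f g : MvPolynomial Λ (Tropical (WithTop ℝ)),
            s = {x : Λ → Tropical (WithTop ℝ) |
                  MvPolynomial.eval x f = MvPolynomial.eval x g}ᶜ} =
      (Pi.topologicalSpace : TopologicalSpace (Λ → Tropical (WithTop ℝ))) :=
  le_antisymm strongZariskiTopology_le_pi pi_le_strongZariskiTopology
end

section
/- Let T be a commutative semiring with idempotent addition (t + t = t for all t), A a commutative ring, and α : A → T a map satisfying α (a*b) = α a * α b for all a, b, α (-a) = α a for all a, and the subadditivity identity α a + α b + α (a+b) = α a + α b for all a, b ∈ A. Then for all a, b ∈ A one also has α a + α (a+b) = α a + α b and α b + α (a+b) = α a + α b. In other words, for a multiplicative, sign-invariant, subadditive map into an idempotent semiring, the remaining two bend equalities α(a)+α(a+b) = α(a)+α(b)+α(a+b) and α(b)+α(a+b) = α(a)+α(b)+α(a+b) are automatic. -/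
section

variable {T A : Type*} [AddCommSemigroup T] [AddCommGroup A] {α : A → T}

theorem add_apply_add_eq_of_subadditive (hneg : ∀ a, α (-a) = α a)
    (hadd : ∀ a b, α a + α b + α (a + b) = α a + α b) (a b : A) :
    α a + α (a + b) = α a + α b := by
  -- subadditivity at `(a + b, -a)` absorbs `α b` into `α (a + b) + α a`
  have hshift := hadd (a + b) (-a)
  rw [add_neg_cancel_comm, hneg] at hshift
  calc α a + α (a + b) = α (a + b) + α a + α b := by rw [hshift, add_comm]
    _ = α a + α b + α (a + b) := by ac_rfl
    _ = α a + α b := hadd a b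

end

theorem bend_relations_redundant_general
    {T : Type*} [CommSemiring T]
    {A : Type*} [CommRing A] (α : A → T)
    (hneg : ∀ a : A, α (-a) = α a)
    (hadd : ∀ a b : A, α a + α b + α (a + b) = α a + α b) :
    ∀ a b : A, α a + α (a + b) = α a + α b ∧ α b + α (a + b) = α a + α b := by
  intro a b
  refine ⟨add_apply_add_eq_of_subadditive hneg hadd a b, ?_⟩
  rw [add_comm a, add_comm (α a)]
  exact add_apply_add_eq_of_subadditive hneg hadd b a

/-- **Redundancy of the remaining bend relations.**
For a multiplicative, sign-invariant, subadditive map `α : A → T` into an idempotent semiring,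
the subadditivity identity `α a + α b + α (a+b) = α a + α b` implies the remaining two bend
equalities `α a + α (a+b) = α a + α b` and `α b + α (a+b) = α a + α b`. -/
theorem bend_relations_redundant
    {T : Type*} [CommSemiring T] (hT : ∀ t : T, t + t = t)
    {A : Type*} [CommRing A] (α : A → T)
    (hmul : ∀ a b : A, α (a * b) = α a * α b)
    (hneg : ∀ a : A, α (-a) = α a)
    (hadd : ∀ a b : A, α a + α b + α (a + b) = α a + α b) :
    ∀ a b : A, α a + α (a + b) = α a + α b ∧ α b + α (a + b) = α a + α b :=
  bend_relations_redundant_general α hneg hadd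
end

section
/- Let S be a commutative semiring with idempotent addition (s + s = s for all s) and A a commutative ring. Let J be the congruence (RingCon) on MonoidAlgebra S A generated by the pairs (single a 1, single (-a) 1) for a ∈ A, together with all bend-relation pairs (p, p.erase m), m ∈ A, of the elements p = single a 1 + single b 1 + single (-(a+b)) 1 for a, b ∈ A. Then for every nonempty finite index set ι, every family b : ι → A with ∑ i, b i = 0, and every j ∈ ι, the congruence J relates ∑_{i ∈ ι} single (b i) 1 and ∑_{i ∈ ι, i ≠ j} single (b i) 1. -/
/-!
Work with any additive map `φ` identifying `xₐ` with `x₋ₐ` and each three-term sum with its bends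
(the quotient map by `J` is one). Writing the sum as `xₐ + X` with `a + ∑ X = 0`, induct on `X`:
for `X = x_k + Y`, the induction hypothesis `x₍ₐ₊ₖ₎ + Y ∼ Y` and `x₍ₐ₊ₖ₎ ∼ x₋₍ₐ₊ₖ₎` give
`xₐ + x_k + Y ∼ (xₐ + x_k + x₋₍ₐ₊ₖ₎) + Y`, which bends to `x_k + x₋₍ₐ₊ₖ₎ + Y ∼ x_k + Y`.
-/

open MonoidAlgebra Finset

namespace MonoidAlgebra

variable {S A : Type*} [CommSemiring S]

theorem single_add_self_of_idempotent (hS : ∀ s : S, s + s = s) (a : A) (s : S) :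
    single a s + single a s = single a s := by
  rw [← single_add, hS]

theorem erase_single_add_single_add_single {a b c : A} (hab : a ≠ b) (hac : a ≠ c) (r s t : S) :
    (single a r + single b s + single c t).erase a = single b s + single c t := by
  ext x
  simp only [coeff_erase, coeff_add, coeff_single, Finsupp.erase_add, Finsupp.erase_single,
    Finsupp.erase_single_ne hab, Finsupp.erase_single_ne hac, zero_add]

end MonoidAlgebra

section ThreeTermRelations

variable {S A M : Type*} [CommSemiring S] [AddCommGroup A] [AddCommMonoid M]

variable (S) in
noncomputable def threeTermSum (a b : A) : MonoidAlgebra S A :=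
  single a 1 + single b 1 + single (-(a + b)) 1

/-- Either `a` is one of the other two exponents and idempotency absorbs `xₐ`, or erasing the
exponent `a` removes exactly the term `xₐ`. -/
theorem apply_threeTermSum_eq (hS : ∀ s : S, s + s = s) (φ : MonoidAlgebra S A →+ M)
    (hbend : ∀ a b m : A, φ (threeTermSum S a b) = φ ((threeTermSum S a b).erase m)) (a b : A) :
    φ (threeTermSum S a b) = φ (single b 1 + single (-(a + b)) 1) := by
  by_cases hb : a = b
  · subst hb
    rw [threeTermSum, single_add_self_of_idempotent hS]
  by_cases hc : a = -(a + b)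
  · rw [threeTermSum, ← hc, add_right_comm, single_add_self_of_idempotent hS, add_comm]
  rw [hbend a b a, threeTermSum, erase_single_add_single_add_single hb hc]

theorem apply_single_zero_eq_zero (hS : ∀ s : S, s + s = s) (φ : MonoidAlgebra S A →+ M)
    (hbend : ∀ a b m : A, φ (threeTermSum S a b) = φ ((threeTermSum S a b).erase m)) :
    φ (single 0 1) = 0 := by
  have hx₀ : threeTermSum S (0 : A) 0 = single 0 1 := by
    rw [threeTermSum, add_zero, neg_zero, single_add_self_of_idempotent hS,
      single_add_self_of_idempotent hS]
  simpa [hx₀] using hbend 0 0 0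

theorem apply_single_add_sum_eq_of_add_sum_eq_zero (hS : ∀ s : S, s + s = s)
    (φ : MonoidAlgebra S A →+ M) (hneg : ∀ a : A, φ (single a 1) = φ (single (-a) 1))
    (hbend : ∀ a b m : A, φ (threeTermSum S a b) = φ ((threeTermSum S a b).erase m))
    {ι : Type*} [DecidableEq ι] (f : ι → A) (s : Finset ι) :
    ∀ a : A, a + ∑ i ∈ s, f i = 0 →
      φ (single a 1 + ∑ i ∈ s, single (f i) 1) = φ (∑ i ∈ s, single (f i) 1) := by
  induction s using Finset.induction_on with
  | empty =>
    intro a ha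
    rw [sum_empty, add_zero] at ha
    rw [ha, sum_empty, add_zero, apply_single_zero_eq_zero hS φ hbend, map_zero]
  | insert k s hk ih =>
    intro a ha
    rw [sum_insert hk, ← add_assoc] at ha
    have hX := ih (a + f k) ha
    have hthree := apply_threeTermSum_eq hS φ hbend a (f k)
    simp only [threeTermSum, map_add] at hX hthree
    simp only [sum_insert hk, map_add]
    calc φ (single a 1) + (φ (single (f k) 1) + φ (∑ i ∈ s, single (f i) 1))
        = φ (single a 1) + (φ (single (f k) 1) +
            (φ (single (a + f k) 1) + φ (∑ i ∈ s, single (f i) 1))) := by rw [hX]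
      _ = φ (single a 1) + φ (single (f k) 1) + φ (single (-(a + f k)) 1) +
            φ (∑ i ∈ s, single (f i) 1) := by rw [hneg (a + f k)]; abel
      _ = φ (single (f k) 1) + (φ (single (a + f k) 1) + φ (∑ i ∈ s, single (f i) 1)) := by
            rw [hthree, ← hneg]; abel
      _ = φ (single (f k) 1) + φ (∑ i ∈ s, single (f i) 1) := by rw [hX]

end ThreeTermRelations

/-- **Key computation for the strong tropical basis.**
Let `S` be an idempotent semiring and `A` a commutative ring.  In the congruence `J` on
`MonoidAlgebra S A` generated by the relations `xₐ ∼ x₋ₐ` together with the bend relations of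
the three-term elements `xₐ + x_b + x₋₍ₐ₊b₎`, every monic zero-sum combination `∑ᵢ x_{bᵢ}` with
`∑ᵢ bᵢ = 0` is related to each of its bends `∑_{i ≠ j} x_{bᵢ}`. -/
theorem bend_of_zero_sum_in_three_term_congruence
    {S A : Type*} [CommSemiring S] [CommRing A]
    (hS : ∀ s : S, s + s = s)
    (J : RingCon (MonoidAlgebra S A))
    (hJ : J = ringConGen (fun (p q : MonoidAlgebra S A) =>
      (∃ a : A, p = MonoidAlgebra.single a 1 ∧ q = MonoidAlgebra.single (-a) 1) ∨
      (∃ a b : A, ∃ m : A,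
        p = MonoidAlgebra.single a 1 + MonoidAlgebra.single b 1 +
              MonoidAlgebra.single (-(a + b)) 1 ∧
        q = (MonoidAlgebra.single a 1 + MonoidAlgebra.single b 1 +
              MonoidAlgebra.single (-(a + b)) (1 : S)).erase m))) :
    ∀ (ι : Type) [Fintype ι] [Nonempty ι] [DecidableEq ι] (b : ι → A),
      (∑ i, b i) = 0 → ∀ j : ι,
        J (∑ i, MonoidAlgebra.single (b i) (1 : S))
          (∑ i ∈ Finset.univ.erase j, MonoidAlgebra.single (b i) (1 : S)) := by
  intro ι _ _ _ b hb j
  have hrel : ∀ p q, J p q ↔ J.mk' p = J.mk' q := fun _ _ => J.eq.symm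
  have hgen : ∀ p q, _ → J p q := fun p q h => hJ ▸ RingConGen.Rel.of p q h
  have hneg : ∀ a : A, J.mk' (single a 1) = J.mk' (single (-a) (1 : S)) :=
    fun a => (hrel _ _).1 (hgen _ _ (Or.inl ⟨a, rfl, rfl⟩))
  have hbend : ∀ a c m : A, J.mk' (threeTermSum S a c) = J.mk' ((threeTermSum S a c).erase m) :=
    fun a c m => (hrel _ _).1 (hgen _ _ (Or.inr ⟨a, c, m, rfl, rfl⟩))
  have hj : b j + ∑ i ∈ univ.erase j, b i = 0 := by rwa [add_sum_erase _ _ (mem_univ j)]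
  rw [hrel, ← add_sum_erase _ _ (mem_univ j)]
  exact apply_single_add_sum_eq_of_add_sum_eq_zero hS J.mk'.toAddMonoidHom hneg hbend b _ _ hj
end

section
/- Let R be a commutative ring and A a commutative R-algebra. For every finite index set ι and family b : ι → A, the element (∑_{i ∈ ι} single (b i) (1:R)) − single (∑_{i ∈ ι} b i) 1 of MonoidAlgebra R A lies in the additive subgroup generated by the element single 0 1 together with the elements single a 1 + single b 1 + single c 1 for a, b, c ∈ A with a + b + c = 0. -/
/-!
Writing `x_a` for `single a 1`, the relators give
`x_a + x_b - x_{a+b} = (x_a + x_b + x_{-(a+b)}) - (x_{a+b} + x_{-(a+b)} + x_0) + x_0`,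
and induction on the number of summands turns this two-term identity into the general one.
-/

open MonoidAlgebra

section

variable (R A : Type*) [Ring R] [AddCommGroup A]

noncomputable def threeTermRelatorSubgroup : AddSubgroup (MonoidAlgebra R A) :=
  AddSubgroup.closure
    ({single (0 : A) (1 : R)} ∪
      {p | ∃ a b c : A, a + b + c = 0 ∧ p = single a 1 + single b 1 + single c 1})

variable {R A}

theorem single_zero_one_mem_threeTermRelatorSubgroup :
    single (0 : A) (1 : R) ∈ threeTermRelatorSubgroup R A :=
  AddSubgroup.subset_closure (Or.inl rfl)

theorem single_add_single_add_single_mem_threeTermRelatorSubgroup {a b c : A}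
    (h : a + b + c = 0) :
    single a (1 : R) + single b 1 + single c 1 ∈ threeTermRelatorSubgroup R A :=
  AddSubgroup.subset_closure (Or.inr ⟨a, b, c, h, rfl⟩)

theorem single_add_single_sub_single_add_mem_threeTermRelatorSubgroup (x y : A) :
    single x (1 : R) + single y 1 - single (x + y) 1 ∈ threeTermRelatorSubgroup R A := by
  have hxy := single_add_single_add_single_mem_threeTermRelatorSubgroup (R := R)
    (show x + y + -(x + y) = 0 by abel)
  have hneg := single_add_single_add_single_mem_threeTermRelatorSubgroup (R := R)
    (show x + y + -(x + y) + 0 = 0 by abel)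
  have h := add_mem (sub_mem hxy hneg) single_zero_one_mem_threeTermRelatorSubgroup
  convert h using 1
  abel

theorem finsetSum_single_sub_single_finsetSum_mem_threeTermRelatorSubgroup {ι : Type*}
    (s : Finset ι) (b : ι → A) :
    (∑ i ∈ s, single (b i) (1 : R)) - single (∑ i ∈ s, b i) 1 ∈
      threeTermRelatorSubgroup R A := by
  induction s using Finset.cons_induction with
  | empty =>
    simpa only [Finset.sum_empty, zero_sub, neg_mem_iff] using
      single_zero_one_mem_threeTermRelatorSubgroup
  | cons j s hj ih =>
    rw [Finset.sum_cons, Finset.sum_cons]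
    have h := add_mem
      (single_add_single_sub_single_add_mem_threeTermRelatorSubgroup (R := R) (b j)
        (∑ i ∈ s, b i)) ih
    convert h using 1
    abel

end

theorem sum_single_sub_single_sum_mem_closure_general
    {R A : Type*} [CommRing R] [CommRing A]
    {ι : Type*} [Fintype ι] (b : ι → A) :
    ((∑ i, MonoidAlgebra.single (b i) (1 : R)) -
        MonoidAlgebra.single (∑ i, b i) 1) ∈
      AddSubgroup.closure
        ({MonoidAlgebra.single (0 : A) (1 : R)} ∪
          {p | ∃ a b c : A, a + b + c = 0 ∧
            p = MonoidAlgebra.single a 1 + MonoidAlgebra.single b 1 +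
                  MonoidAlgebra.single c 1}) :=
  finsetSum_single_sub_single_finsetSum_mem_threeTermRelatorSubgroup Finset.univ b

/-- **Inductive reduction step in the description of `ker ev`.**
For a commutative ring `R` and a commutative `R`-algebra `A`, any element
`∑ᵢ x_{bᵢ} − x_{∑ᵢ bᵢ}` of `MonoidAlgebra R A` lies in the additive subgroup generated by
`x₀` together with the three-term relators `xₐ + x_b + x_c` with `a + b + c = 0`. -/
theorem sum_single_sub_single_sum_mem_closure
    {R A : Type*} [CommRing R] [CommRing A] [Algebra R A]
    {ι : Type*} [Fintype ι] (b : ι → A) :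
    ((∑ i, MonoidAlgebra.single (b i) (1 : R)) -
        MonoidAlgebra.single (∑ i, b i) 1) ∈
      AddSubgroup.closure
        ({MonoidAlgebra.single (0 : A) (1 : R)} ∪
          {p | ∃ a b c : A, a + b + c = 0 ∧
            p = MonoidAlgebra.single a 1 + MonoidAlgebra.single b 1 +
                  MonoidAlgebra.single c 1}) :=
  sum_single_sub_single_sum_mem_closure_general b
end

section
/- Let Λ be a type and let 𝕋 := Tropical (WithTop ℝ) be the tropical semiring, equipped with the topology induced by Tropical.untrop from the order topology on WithTop ℝ. For all f, g ∈ MvPolynomial Λ 𝕋, the set {x : Λ → 𝕋 | MvPolynomial.eval x f = MvPolynomial.eval x g} is closed in the product topology on Λ → 𝕋. -/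
theorem EReal.isEmbedding_coe_withTop :
    Topology.IsEmbedding (X := WithTop ℝ) (Y := EReal) WithBot.some :=
  WithBot.isEmbedding_coe

instance inst_s13 : ContinuousAdd (WithTop ℝ) := by
  have hcoe := EReal.isEmbedding_coe_withTop
  refine ⟨hcoe.continuous_iff.mpr <| continuous_iff_continuousAt.mpr fun p ↦ ?_⟩
  have hadd : ContinuousAt (fun q : EReal × EReal ↦ q.1 + q.2)
      (Prod.map WithBot.some WithBot.some p) :=
    EReal.continuousAt_add (Or.inr WithBot.coe_ne_bot) (Or.inl WithBot.coe_ne_bot)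
  convert hadd.comp (hcoe.continuous.prodMap hcoe.continuous).continuousAt using 1
  exact funext fun q ↦ WithBot.coe_add q.1 q.2

namespace Tropical

@[fun_prop]
theorem continuous_untrop_s13 : Continuous (untrop : Tropical (WithTop ℝ) → WithTop ℝ) :=
  continuous_induced_dom

instance : IsTopologicalSemiring (Tropical (WithTop ℝ)) where
  continuous_add := continuous_induced_rng.mpr <| by
    simp only [Function.comp_def, untrop_add]; fun_prop
  continuous_mul := continuous_induced_rng.mpr <| by
    simp only [Function.comp_def, untrop_mul]; fun_prop

instance : T2Space (Tropical (WithTop ℝ)) :=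
  .of_injective_continuous injective_untrop continuous_untrop_s13

end Tropical

/-- **Equalizer sets of tropical polynomials are Euclidean closed.**
For tropical polynomials `f, g` in variables `Λ`, the set of points of tropical affine space
`𝕋^Λ` where `f` and `g` agree is closed in the product (Euclidean) topology. -/
theorem isClosed_tropical_equalizer (Λ : Type*)
    (f g : MvPolynomial Λ (Tropical (WithTop ℝ))) :
    IsClosed {x : Λ → Tropical (WithTop ℝ) |
      MvPolynomial.eval x f = MvPolynomial.eval x g} :=
  isClosed_eq (MvPolynomial.continuous_eval f) (MvPolynomial.continuous_eval g)
end

section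
/- Let Λ be a type and let 𝕋 := Tropical (WithTop ℝ) be the tropical semiring, with its linear order. For every i ∈ Λ and every c ∈ 𝕋, the sets {x : Λ → 𝕋 | x i < c} and {x : Λ → 𝕋 | c < x i} belong to the topology on Λ → 𝕋 generated (TopologicalSpace.generateFrom) by the collection of sets {x : Λ → 𝕋 | MvPolynomial.eval x f = MvPolynomial.eval x g}ᶜ for f, g ∈ MvPolynomial Λ 𝕋. Explicitly, {x | x i < c} is the complement of the equalizer of the polynomials X i + C c and C c, and {x | c < x i} is the complement of the equalizer of X i + C c and X i. -/
open MvPolynomial TopologicalSpace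

namespace Tropical

variable {σ R : Type*} [LinearOrderedAddCommMonoidWithTop R]

theorem setOf_lt_eq_compl_eval_X_add_C_eq_C (i : σ) (c : Tropical R) :
    {x : σ → Tropical R | x i < c} = {x | eval x (X i + C c) = eval x (C c)}ᶜ := by
  ext x
  simp [add_eq_right_iff]

theorem setOf_gt_eq_compl_eval_X_add_C_eq_X (i : σ) (c : Tropical R) :
    {x : σ → Tropical R | c < x i} = {x | eval x (X i + C c) = eval x (X i)}ᶜ := by
  ext x
  simp [add_eq_left_iff]

end Tropical

/-- **Open rays are strong Zariski open in tropical affine space.**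
Let `𝕋 = Tropical (WithTop ℝ)`.  For every coordinate `i` and constant `c`, the subbasic open
rays `{x | x i < c}` and `{x | c < x i}` of the Euclidean (product of order) topology on `𝕋^Λ`
belong to the topology generated by the complements of equalizer sets of pairs of tropical
polynomials; explicitly, `{x | x i < c}` is the complement of the equalizer of `X i + C c` and
`C c`, and `{x | c < x i}` is the complement of the equalizer of `X i + C c` and `X i`. -/
theorem rays_strong_zariski_open (Λ : Type*) (i : Λ) (c : Tropical (WithTop ℝ)) :
    ((TopologicalSpace.generateFrom
        {s : Set (Λ → Tropical (WithTop ℝ)) |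
          ∃ f g : MvPolynomial Λ (Tropical (WithTop ℝ)),
            s = {x : Λ → Tropical (WithTop ℝ) | eval x f = eval x g}ᶜ}).IsOpen
          {x : Λ → Tropical (WithTop ℝ) | x i < c} ∧
      (TopologicalSpace.generateFrom
        {s : Set (Λ → Tropical (WithTop ℝ)) |
          ∃ f g : MvPolynomial Λ (Tropical (WithTop ℝ)),
            s = {x : Λ → Tropical (WithTop ℝ) | eval x f = eval x g}ᶜ}).IsOpen
          {x : Λ → Tropical (WithTop ℝ) | c < x i}) ∧
    {x : Λ → Tropical (WithTop ℝ) | x i < c} =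
      ({x : Λ → Tropical (WithTop ℝ) | eval x (X i + C c) = eval x (C c)})ᶜ ∧
    {x : Λ → Tropical (WithTop ℝ) | c < x i} =
      ({x : Λ → Tropical (WithTop ℝ) | eval x (X i + C c) = eval x (X i)})ᶜ := by
  have hlt := Tropical.setOf_lt_eq_compl_eval_X_add_C_eq_C i c
  have hgt := Tropical.setOf_gt_eq_compl_eval_X_add_C_eq_X i c
  exact ⟨⟨isOpen_generateFrom_of_mem ⟨_, _, hlt⟩, isOpen_generateFrom_of_mem ⟨_, _, hgt⟩⟩,
    hlt, hgt⟩
end
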